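/- arXiv:1104.2271 — 4 statements merged into one kernel-verified Lean document; each statement's English description precedes it below -/
import Mathlib

section
/- Let A and B be positive semidefinite n×n complex matrices. Then the matrix product AB is diagonalizable with nonnegative real eigenvalues: there exist an invertible n×n complex matrix P and a diagonal n×n matrix D whose diagonal entries are nonnegative real numbers such that AB = P D P⁻¹. In particular every eigenvalue of AB is a nonnegative real number, and √(AB) is uniquely defined. -/
/-!
Write `A = S⋆S` and `B = T⋆T` and put `Z = S T⋆`. Moving factors across a polynomial
(`q(xy) x = x q(yx)`) gives `q(AB) AB = S⋆ Z q(Z⋆Z) T` for every polynomial `q`. If `q` is the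
product of the `X - r` over the nonzero eigenvalues `r` of the positive semidefinite matrix `Z⋆Z`,
then `Z⋆Z q(Z⋆Z) = 0`, hence `Z q(Z⋆Z) = 0`, so `AB` is annihilated by `X q`. This polynomial has
distinct nonnegative real roots, so `AB` is diagonalizable and its spectrum consists of
nonnegative reals.
-/

open Matrix ComplexOrder Polynomial Module.End

theorem Polynomial.aeval_mul_mul_eq_mul_aeval_mul {R A : Type*} [CommSemiring R] [Semiring A]
    [Algebra R A] (a b : A) (p : R[X]) : aeval (a * b) p * a = a * aeval (b * a) p := by
  have h : SemiconjBy a (b * a) (a * b) := (mul_assoc a b a).symm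
  induction p using Polynomial.induction_on' with
  | add p q hp hq => simp only [map_add, add_mul, mul_add, hp, hq]
  | monomial k c =>
    simp only [aeval_monomial, mul_assoc, Algebra.commutes]
    rw [← mul_assoc, ← (h.pow_right k).eq, mul_assoc]

theorem spectrum.eval_eq_zero_of_aeval_eq_zero {𝕜 A : Type*} [Field 𝕜] [Ring A] [Algebra 𝕜 A]
    {a : A} {p : 𝕜[X]} (hp : aeval a p = 0) {μ : 𝕜} (hμ : μ ∈ spectrum 𝕜 a) : p.eval μ = 0 := by
  have h := spectrum.subset_polynomial_aeval a p ⟨μ, hμ, rfl⟩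
  rw [hp] at h
  by_contra hne
  exact spectrum.mem_iff.mp h (by simpa using (Ne.isUnit hne).map (algebraMap 𝕜 A))

theorem spectrum.subset_image_of_aeval_prod_X_sub_C_eq_zero {𝕜 A ι : Type*} [Field 𝕜] [Ring A]
    [Algebra 𝕜 A] {a : A} {s : Finset ι} {f : ι → 𝕜} (h : aeval a (∏ i ∈ s, (X - C (f i))) = 0) :
    spectrum 𝕜 a ⊆ f '' s := fun μ hμ => by
  have := spectrum.eval_eq_zero_of_aeval_eq_zero h hμ
  simp only [eval_prod, eval_sub, eval_X, eval_C, Finset.prod_eq_zero_iff, sub_eq_zero] at this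
  obtain ⟨i, hi, rfl⟩ := this
  exact ⟨i, hi, rfl⟩

section CFC

variable {R A : Type*} {p : A → Prop} [CommSemiring R] [StarRing R] [MetricSpace R]
  [IsTopologicalSemiring R] [ContinuousStar R] [TopologicalSpace A] [Ring A] [StarRing A]
  [Algebra R A] [ContinuousFunctionalCalculus R A p]

theorem aeval_eq_zero_of_forall_mem_spectrum_eval_eq_zero {a : A} (ha : p a) {q : R[X]}
    (hq : ∀ x ∈ spectrum R a, q.eval x = 0) : aeval a q = 0 := by
  rw [← cfc_polynomial q a, cfc_congr (g := 0) hq, cfc_zero]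

end CFC

namespace Matrix

section Diagonalization

variable {K n : Type*} [Field K] [Fintype n] [DecidableEq n]

theorem exists_basis_mulVec_eq_smul_of_iSup_eigenspace_eq_top {M : Matrix n n K}
    (h : ⨆ μ, eigenspace (toLin' M) μ = ⊤) :
    ∃ (b : Module.Basis n K (n → K)) (d : n → K), ∀ i, M *ᵥ b i = d i • b i := by
  classical
  have hint : DirectSum.IsInternal fun μ => eigenspace (toLin' M) μ :=
    (DirectSum.isInternal_submodule_iff_iSupIndep_and_iSup_eq_top _).mpr
      ⟨eigenspaces_iSupIndep _, h⟩
  let v := fun μ => Module.Free.chooseBasis K (eigenspace (toLin' M) μ)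
  let e := (hint.collectedBasis v).indexEquiv (Pi.basisFun K n)
  refine ⟨(hint.collectedBasis v).reindex e, fun i => (e.symm i).1, fun i => ?_⟩
  simpa using mem_eigenspace_iff.mp (hint.collectedBasis_mem v (e.symm i))

theorem exists_eq_mul_diagonal_mul_inv_of_mulVec_eq_smul {M : Matrix n n K}
    (b : Module.Basis n K (n → K)) {d : n → K} (h : ∀ i, M *ᵥ b i = d i • b i) :
    ∃ P : Matrix n n K, IsUnit P.det ∧ M = P * diagonal d * P⁻¹ := by
  let P := (Pi.basisFun K n).toMatrix b
  have : Invertible P := (Pi.basisFun K n).invertibleToMatrix b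
  have hMP : M * P = P * diagonal d := by
    ext i j
    rw [mul_diagonal]
    simpa [P, Module.Basis.toMatrix_apply, mul_apply, mul_comm, mulVec, dotProduct] using
      congrFun (h j) i
  refine ⟨P, isUnit_det_of_invertible P, ?_⟩
  rw [← hMP, Matrix.mul_assoc, mul_inv_of_invertible, Matrix.mul_one]

theorem exists_eq_mul_diagonal_mul_inv_of_squarefree_aeval_eq_zero [IsAlgClosed K]
    {M : Matrix n n K} {p : K[X]} (hp : Squarefree p) (hM : aeval M p = 0) :
    ∃ (P : Matrix n n K) (d : n → K), IsUnit P.det ∧ (∀ i, d i ∈ spectrum K M) ∧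
      M = P * diagonal d * P⁻¹ := by
  have hss : IsSemisimple (toLin' M) := by
    refine isSemisimple_of_squarefree_aeval_eq_zero hp ?_
    rw [show toLin' M = toLinAlgEquiv' M from rfl, aeval_algEquiv]
    simp [hM]
  obtain ⟨b, d, hb⟩ :=
    exists_basis_mulVec_eq_smul_of_iSup_eigenspace_eq_top hss.iSup_eigenspace_eq_top
  obtain ⟨P, hP, hM⟩ := exists_eq_mul_diagonal_mul_inv_of_mulVec_eq_smul b hb
  refine ⟨P, d, hP, fun i => ?_, hM⟩
  rw [← spectrum_toLin', ← hasEigenvalue_iff_mem_spectrum]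
  exact hasEigenvalue_of_hasEigenvector ⟨mem_eigenspace_iff.mpr (by simpa using hb i), b.ne_zero i⟩

end Diagonalization

variable {𝕜 n : Type*} [RCLike 𝕜] [Fintype n] [DecidableEq n]

open scoped MatrixOrder in
theorem PosSemidef.exists_aeval_prod_X_sub_C_eq_zero {W : Matrix n n 𝕜} (hW : W.PosSemidef) :
    ∃ s : Finset ℝ, 0 ∈ s ∧ (∀ r ∈ s, 0 ≤ r) ∧ aeval W (∏ r ∈ s, (X - C r)) = 0 := by
  refine ⟨insert 0 (finite_real_spectrum (A := W)).toFinset, Finset.mem_insert_self 0 _,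
    fun r hr => ?_, ?_⟩
  · rcases Finset.mem_insert.mp hr with rfl | hr
    · exact le_rfl
    · exact spectrum_nonneg_of_nonneg hW.nonneg (by simpa using hr)
  · refine aeval_eq_zero_of_forall_mem_spectrum_eval_eq_zero hW.isHermitian fun x hx => ?_
    rw [eval_prod]
    exact Finset.prod_eq_zero (Finset.mem_insert_of_mem (by simpa using hx)) (by simp)

open scoped MatrixOrder in
theorem PosSemidef.exists_aeval_mul_prod_X_sub_C_eq_zero {A B : Matrix n n 𝕜} (hA : A.PosSemidef)
    (hB : B.PosSemidef) :
    ∃ s : Finset ℝ, (∀ r ∈ s, 0 ≤ r) ∧ aeval (A * B) (∏ r ∈ s, (X - C (r : 𝕜))) = 0 := by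
  obtain ⟨S, rfl⟩ := CStarAlgebra.nonneg_iff_eq_star_mul_self.mp hA.nonneg
  obtain ⟨T, rfl⟩ := CStarAlgebra.nonneg_iff_eq_star_mul_self.mp hB.nonneg
  rw [star_eq_conjTranspose, star_eq_conjTranspose]
  set Z := S * Tᴴ
  obtain ⟨s, h0, hs, hW⟩ := (posSemidef_conjTranspose_mul_self Z).exists_aeval_prod_X_sub_C_eq_zero
  set q : ℝ[X] := ∏ r ∈ s.erase 0, (X - C r)
  have hZq : Z * aeval (Zᴴ * Z) q = 0 := by
    rw [← Finset.mul_prod_erase s _ h0, map_zero, sub_zero, map_mul, aeval_X] at hW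
    rwa [← conjTranspose_mul_self_mul_eq_zero]
  have hprod : ∏ r ∈ s, (X - C (r : 𝕜)) = (q * X).map (algebraMap ℝ 𝕜) := by
    rw [← Finset.prod_erase_mul s _ h0]
    simp [q, Polynomial.map_prod]
  refine ⟨s, hs, ?_⟩
  rw [hprod, aeval_map_algebraMap, map_mul, aeval_X]
  calc aeval (Sᴴ * S * (Tᴴ * T)) q * (Sᴴ * S * (Tᴴ * T))
      = aeval (Sᴴ * (Z * T)) q * Sᴴ * (Z * T) := by simp only [Z, Matrix.mul_assoc]
    _ = Sᴴ * (aeval (Z * (T * Sᴴ)) q * Z) * T := by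
        rw [aeval_mul_mul_eq_mul_aeval_mul]; simp only [Matrix.mul_assoc]
    _ = Sᴴ * (Z * aeval (Zᴴ * Z) q) * T := by
        rw [← conjTranspose_conjTranspose T, ← conjTranspose_mul, conjTranspose_conjTranspose,
          aeval_mul_mul_eq_mul_aeval_mul]
    _ = 0 := by rw [hZq, Matrix.mul_zero, Matrix.zero_mul]

end Matrix

/-- If `A` and `B` are positive semidefinite complex matrices, then `A * B` is
diagonalizable with nonnegative real eigenvalues: `A * B = P * D * P⁻¹` for some
invertible `P` and a diagonal matrix `D` with nonnegative real diagonal entries;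
in particular every element of the spectrum of `A * B` is a nonnegative real number. -/
theorem mul_posSemidef_diagonalizable_nonneg_eigenvalues
    {n : ℕ} {A B : Matrix (Fin n) (Fin n) ℂ}
    (hA : A.PosSemidef) (hB : B.PosSemidef) :
    (∃ (P D : Matrix (Fin n) (Fin n) ℂ),
        IsUnit P.det ∧ D.IsDiag ∧ (∀ i, ∃ r : ℝ, 0 ≤ r ∧ D i i = (r : ℂ)) ∧
        A * B = P * D * P⁻¹) ∧
    (∀ μ ∈ spectrum ℂ (A * B), ∃ r : ℝ, 0 ≤ r ∧ μ = (r : ℂ)) := by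
  obtain ⟨s, hs, hAB⟩ := hA.exists_aeval_mul_prod_X_sub_C_eq_zero hB
  have hspec : ∀ μ ∈ spectrum ℂ (A * B), ∃ r : ℝ, 0 ≤ r ∧ μ = (r : ℂ) := fun μ hμ => by
    obtain ⟨r, hr, rfl⟩ := spectrum.subset_image_of_aeval_prod_X_sub_C_eq_zero hAB hμ
    exact ⟨r, hs r hr, rfl⟩
  have hsq : Squarefree (∏ r ∈ s, (X - C (r : ℂ))) :=
    (separable_prod_X_sub_C_iff'.mpr fun _ _ _ _ h => Complex.ofReal_injective h).squarefree
  obtain ⟨P, d, hP, hd, hPd⟩ := exists_eq_mul_diagonal_mul_inv_of_squarefree_aeval_eq_zero hsq hAB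
  exact ⟨⟨P, diagonal d, hP, isDiag_diagonal d, fun i => by simpa using hspec _ (hd i), hPd⟩, hspec⟩
end

section
/- Let A and B be positive semidefinite n×n complex matrices. Then tr √(√A · B · √A) = tr √(√B · A · √B), where √M denotes the unique positive semidefinite square root of a positive semidefinite matrix M. (Both sides equal tr |√A √B|, so the two Uhlmann expressions for the root fidelity coincide.) -/
open scoped Classical

open Matrix ComplexOrder

/-- The positive semidefinite square root of a matrix: the unique PSD square root
when the matrix is PSD, and `0` otherwise. -/
noncomputable def msqrt {n : Type*} [Fintype n] [DecidableEq n]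
    (A : Matrix n n ℂ) : Matrix n n ℂ :=
  if h : A.PosSemidef then
    (h.1.eigenvectorUnitary : Matrix n n ℂ) *
      diagonal ((↑) ∘ (Real.sqrt ∘ h.1.eigenvalues)) *
      (star h.1.eigenvectorUnitary : Matrix n n ℂ)
  else 0

/-!
`√A B √A = (√A √B)(√B √A)` and `√B A √B = (√B √A)(√A √B)` are products of the same two
matrices in opposite orders, so they have the same characteristic polynomial. The trace of
the square root of a positive semidefinite matrix is `∑ √λ` over the roots `λ` of its
characteristic polynomial, hence depends only on that polynomial.
-/

section

open scoped MatrixOrder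

variable {n : Type*} [Fintype n] [DecidableEq n]

theorem msqrt_eq_cfcSqrt {A : Matrix n n ℂ} (hA : A.PosSemidef) :
    msqrt A = CFC.sqrt A := by
  rw [msqrt, dif_pos hA, CFC.sqrt_eq_real_sqrt A hA.nonneg, cfcₙ_eq_cfc (hf0 := by simp),
    hA.1.cfc_eq, IsHermitian.cfc, Unitary.conjStarAlgAut_apply]
  rfl

theorem isHermitian_msqrt {A : Matrix n n ℂ} (hA : A.PosSemidef) : (msqrt A).IsHermitian := by
  rw [msqrt_eq_cfcSqrt hA]
  exact (CFC.sqrt_nonneg A).posSemidef.1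

theorem msqrt_mul_self {A : Matrix n n ℂ} (hA : A.PosSemidef) : msqrt A * msqrt A = A := by
  rw [msqrt_eq_cfcSqrt hA]
  exact CFC.sqrt_mul_sqrt_self A hA.nonneg

theorem trace_msqrt {M : Matrix n n ℂ} (hM : M.PosSemidef) :
    (msqrt M).trace = (M.charpoly.roots.map fun z => (Real.sqrt z.re : ℂ)).sum := by
  rw [msqrt, dif_pos hM, trace_mul_cycle, Unitary.coe_star_mul_self, one_mul, trace_diagonal,
    hM.1.roots_charpoly_eq_eigenvalues, Multiset.map_map]
  rfl

theorem trace_msqrt_eq_of_charpoly_eq {M N : Matrix n n ℂ} (hM : M.PosSemidef)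
    (hN : N.PosSemidef) (h : M.charpoly = N.charpoly) : (msqrt M).trace = (msqrt N).trace := by
  rw [trace_msqrt hM, trace_msqrt hN, h]

end

/-- For positive semidefinite `A`, `B` one has
`tr √(√A · B · √A) = tr √(√B · A · √B)`. -/
theorem trace_sqrt_conj_comm {n : ℕ} {A B : Matrix (Fin n) (Fin n) ℂ}
    (hA : A.PosSemidef) (hB : B.PosSemidef) :
    (msqrt (msqrt A * B * msqrt A)).trace = (msqrt (msqrt B * A * msqrt B)).trace := by
  have hsA := isHermitian_msqrt hA
  have hsB := isHermitian_msqrt hB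
  have hAB : msqrt A * B * msqrt A = (msqrt A * msqrt B) * (msqrt B * msqrt A) := by
    conv_lhs => rw [← msqrt_mul_self hB]
    simp only [mul_assoc]
  have hBA : msqrt B * A * msqrt B = (msqrt B * msqrt A) * (msqrt A * msqrt B) := by
    conv_lhs => rw [← msqrt_mul_self hA]
    simp only [mul_assoc]
  refine trace_msqrt_eq_of_charpoly_eq ?_ ?_ ?_
  · simpa only [hsA.eq] using hB.conjTranspose_mul_mul_same (msqrt A)
  · simpa only [hsB.eq] using hA.conjTranspose_mul_mul_same (msqrt B)
  · rw [hAB, hBA, charpoly_mul_comm]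
end

section
/- Let σ be a 2×2 complex density matrix whose determinant D satisfies 0 < D < 1/4. Then the von Neumann entropy of σ (with natural logarithm) is given by the integral representation S(σ) = ∫₀^∞ D(2t+1) / ((t+1)(t² + t + D)) dt. -/
/-!
The eigenvalues `p` and `1 - p` of `σ` are positive with product `D`, so the integrand is
`p(1-p)(2t+1) / ((t+1)(t+p)(t+1-p))`, whose partial fractions give the primitive
`p log (t + p) + (1 - p) log (t + 1 - p) - log (t + 1)`. It tends to `0` at infinity and equals
`p log p + (1 - p) log (1 - p)` at `0`, so the integral is the binary entropy of `p`, which is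
the von Neumann entropy of `σ`.
-/

open scoped Classical

open Matrix ComplexOrder MeasureTheory

/-- Von Neumann entropy of a (Hermitian) matrix via its eigenvalues, with natural
logarithm and the convention `0 ln 0 = 0`. -/
noncomputable def vnEntropy {𝕜 : Type*} [RCLike 𝕜] {n : Type*} [Fintype n] [DecidableEq n]
    (σ : Matrix n n 𝕜) : ℝ :=
  if h : σ.IsHermitian then -∑ i, (h.eigenvalues i) * Real.log (h.eigenvalues i) else 0

open Filter Real

lemma Real.tendsto_log_add_sub_log_add (a b : ℝ) :
    Tendsto (fun t : ℝ => log (t + a) - log (t + b)) atTop (nhds 0) := by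
  simpa using (tendsto_log_comp_add_sub_log a).sub (tendsto_log_comp_add_sub_log b)

lemma Real.hasDerivAt_binEntropy_primitive {p x : ℝ} (hp₀ : 0 < p) (hp₁ : p < 1) (hx : 0 ≤ x) :
    HasDerivAt (fun t => p * log (t + p) + (1 - p) * log (t + (1 - p)) - log (t + 1))
      (p * (1 - p) * (2 * x + 1) / ((x + 1) * (x ^ 2 + x + p * (1 - p)))) x := by
  have hlog {c : ℝ} (hc : 0 < c) : HasDerivAt (fun t => log (t + c)) (x + c)⁻¹ x := by
    simpa using ((hasDerivAt_id x).add_const c).log (by positivity : x + c ≠ 0)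
  refine (((hlog hp₀).const_mul p).add ((hlog (sub_pos.2 hp₁)).const_mul (1 - p))
    |>.sub (hlog one_pos)).congr_deriv ?_
  have : x + (1 - p) ≠ 0 := by linarith
  rw [show x ^ 2 + x + p * (1 - p) = (x + p) * (x + (1 - p)) by ring]
  field_simp
  ring

theorem Real.integral_Ioi_eq_binEntropy {p : ℝ} (hp₀ : 0 < p) (hp₁ : p < 1) :
    ∫ t in Set.Ioi (0 : ℝ), p * (1 - p) * (2 * t + 1) / ((t + 1) * (t ^ 2 + t + p * (1 - p)))
      = binEntropy p := by
  have hlim : Tendsto (fun t => p * log (t + p) + (1 - p) * log (t + (1 - p)) - log (t + 1))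
      atTop (nhds 0) := by
    refine (((tendsto_log_add_sub_log_add p 1).const_mul p).add
      ((tendsto_log_add_sub_log_add (1 - p) 1).const_mul (1 - p))).congr (fun t => ?_) |>.trans
      (by simp)
    ring
  have hnonneg (x : ℝ) (hx : x ∈ Set.Ioi 0) :
      0 ≤ p * (1 - p) * (2 * x + 1) / ((x + 1) * (x ^ 2 + x + p * (1 - p))) := by
    have : 0 < 1 - p := sub_pos.2 hp₁
    have : (0 : ℝ) < x := hx
    positivity
  rw [integral_Ioi_of_hasDerivAt_of_nonneg'
    (fun x hx => hasDerivAt_binEntropy_primitive hp₀ hp₁ hx) hnonneg hlim]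
  simp [binEntropy, log_inv]
  ring

section Qubit

variable {𝕜 : Type*} [RCLike 𝕜]

lemma vnEntropy_eq_sum_negMulLog {n : Type*} [Fintype n] [DecidableEq n] {σ : Matrix n n 𝕜}
    (h : σ.IsHermitian) : vnEntropy σ = ∑ i, negMulLog (h.eigenvalues i) := by
  simp [vnEntropy, h, negMulLog]

lemma Matrix.IsHermitian.eigenvalues_one_eq_one_sub {A : Matrix (Fin 2) (Fin 2) 𝕜}
    (hA : A.IsHermitian) (htr : A.trace = 1) : hA.eigenvalues 1 = 1 - hA.eigenvalues 0 := by
  have : ((hA.eigenvalues 0 + hA.eigenvalues 1 : ℝ) : 𝕜) = (1 : ℝ) := by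
    simpa [hA.trace_eq_sum_eigenvalues, Fin.sum_univ_two] using htr
  linarith [RCLike.ofReal_inj.1 this]

lemma Matrix.IsHermitian.eigenvalues_zero_mul_eigenvalues_one {A : Matrix (Fin 2) (Fin 2) 𝕜}
    (hA : A.IsHermitian) : ((hA.eigenvalues 0 * hA.eigenvalues 1 : ℝ) : 𝕜) = A.det := by
  simp [hA.det_eq_prod_eigenvalues, Fin.prod_univ_two]

lemma vnEntropy_eq_binEntropy {σ : Matrix (Fin 2) (Fin 2) 𝕜} (h : σ.IsHermitian)
    (htr : σ.trace = 1) : vnEntropy σ = binEntropy (h.eigenvalues 0) := by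
  rw [vnEntropy_eq_sum_negMulLog h, Fin.sum_univ_two, binEntropy_eq_negMulLog_add_negMulLog_one_sub,
    h.eigenvalues_one_eq_one_sub htr]

end Qubit

theorem qubit_entropy_integral_repr_general
    {σ : Matrix (Fin 2) (Fin 2) ℂ} (hσ : σ.PosSemidef) (hσt : σ.trace = 1)
    {D : ℝ} (hdet : σ.det = (D : ℂ)) (hD₀ : 0 < D) :
    vnEntropy σ =
      ∫ t in Set.Ioi (0 : ℝ), D * (2 * t + 1) / ((t + 1) * (t ^ 2 + t + D)) := by
  have h := hσ.isHermitian
  have hprod : h.eigenvalues 0 * (1 - h.eigenvalues 0) = D := by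
    rw [← h.eigenvalues_one_eq_one_sub hσt]
    exact RCLike.ofReal_injective ((h.eigenvalues_zero_mul_eigenvalues_one).trans hdet)
  have hp₀ : 0 < h.eigenvalues 0 :=
    (hσ.eigenvalues_nonneg 0).lt_of_ne fun h₀ => by simp [← h₀] at hprod; linarith
  have hp₁ : h.eigenvalues 0 < 1 := by nlinarith [hσ.eigenvalues_nonneg 1]
  rw [vnEntropy_eq_binEntropy h hσt, ← hprod, integral_Ioi_eq_binEntropy hp₀ hp₁]

/-- Integral representation of the entropy of a qubit density matrix in terms of
its determinant `D`: `S(σ) = ∫₀^∞ D(2t+1)/((t+1)(t²+t+D)) dt` for `0 < D < 1/4`. -/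
theorem qubit_entropy_integral_repr
    {σ : Matrix (Fin 2) (Fin 2) ℂ} (hσ : σ.PosSemidef) (hσt : σ.trace = 1)
    {D : ℝ} (hdet : σ.det = (D : ℂ)) (hD₀ : 0 < D) (hD₁ : D < 1 / 4) :
    vnEntropy σ =
      ∫ t in Set.Ioi (0 : ℝ), D * (2 * t + 1) / ((t + 1) * (t ^ 2 + t + D)) :=
  qubit_entropy_integral_repr_general hσ hσt hdet hD₀
end

section
/- Define f : ℝ≥0 → ℝ by f(D) := ∫₀^∞ D(2t+1) / ((t+1)(t² + t + D)) dt. Then for all real numbers a, b with 0 ≤ a ≤ 1 and 0 ≤ b ≤ 1 and all x, y ≥ 0, one has f(a²x + b²y) ≤ a f(x) + b f(y). -/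
/-!
Substituting `s = t² + t` (so `(2t+1) dt = ds` and `t + 1 = 1 / w s` with
`w s = 2 / (1 + √(1 + 4s))`) gives `f D = ∫₀^∞ D w(s) / (s + D) ds`. In this form
`D ↦ D / (s + D)` is subadditive, and the rescaling `s = c² r` shows `f (c² x) ≤ c f x`
for `0 ≤ c ≤ 1`, because `c w(c² r) ≤ w r`. Hence
`f (a² x + b² y) ≤ f (a² x) + f (b² y) ≤ a f x + b f y`.
-/

open MeasureTheory

/-- `f(D) = ∫₀^∞ D(2t+1)/((t+1)(t²+t+D)) dt`. -/
noncomputable def fInt (D : ℝ) : ℝ :=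
  ∫ t in Set.Ioi (0 : ℝ), D * (2 * t + 1) / ((t + 1) * (t ^ 2 + t + D))

open Set

noncomputable def fIntWeight (s : ℝ) : ℝ := 2 / (1 + √(1 + 4 * s))

noncomputable def fIntKernel (D s : ℝ) : ℝ := D * fIntWeight s / (s + D)

lemma fIntWeight_nonneg (s : ℝ) : 0 ≤ fIntWeight s := by
  unfold fIntWeight; positivity

lemma fIntWeight_sq_add_self {t : ℝ} (ht : 0 ≤ t) : fIntWeight (t ^ 2 + t) = (t + 1)⁻¹ := by
  have hsqrt : √(1 + 4 * (t ^ 2 + t)) = 2 * t + 1 := by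
    rw [show 1 + 4 * (t ^ 2 + t) = (2 * t + 1) ^ 2 by ring, Real.sqrt_sq (by linarith)]
  rw [fIntWeight, hsqrt]
  field_simp
  ring

lemma mul_fIntWeight_sq_mul_le {c : ℝ} (hc₀ : 0 ≤ c) (hc₁ : c ≤ 1) (r : ℝ) :
    c * fIntWeight (c ^ 2 * r) ≤ fIntWeight r := by
  have hsqrt : c * √(1 + 4 * r) ≤ √(1 + 4 * (c ^ 2 * r)) := by
    rw [← Real.sqrt_sq hc₀, ← Real.sqrt_mul (sq_nonneg c), Real.sqrt_sq hc₀]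
    exact Real.sqrt_le_sqrt (by nlinarith)
  unfold fIntWeight
  rw [mul_div_assoc', div_le_div_iff₀ (by positivity) (by positivity)]
  nlinarith

lemma fIntKernel_nonneg {D s : ℝ} (hD : 0 ≤ D) (hs : 0 ≤ s) : 0 ≤ fIntKernel D s := by
  have := fIntWeight_nonneg s
  unfold fIntKernel; positivity

lemma fIntKernel_add_le {u v s : ℝ} (hu : 0 ≤ u) (hv : 0 ≤ v) (hs : 0 < s) :
    fIntKernel (u + v) s ≤ fIntKernel u s + fIntKernel v s := by
  have hw := fIntWeight_nonneg s
  unfold fIntKernel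
  rw [add_mul, add_div]
  gcongr <;> linarith

lemma sq_mul_fIntKernel_sq_mul_le {c x r : ℝ} (hc₀ : 0 ≤ c) (hc₁ : c ≤ 1) (hx : 0 ≤ x)
    (hr : 0 < r) : c ^ 2 * fIntKernel (c ^ 2 * x) (c ^ 2 * r) ≤ c * fIntKernel x r := by
  have hrescale : c ^ 2 * fIntKernel (c ^ 2 * x) (c ^ 2 * r)
      = c * (x * (c * fIntWeight (c ^ 2 * r)) / (r + x)) := by
    rcases hc₀.eq_or_lt with rfl | hc
    · simp [fIntKernel]
    · unfold fIntKernel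
      field_simp
  rw [hrescale, fIntKernel]
  gcongr
  exact mul_fIntWeight_sq_mul_le hc₀ hc₁ r

lemma injOn_sq_add_self : InjOn (fun t : ℝ => t ^ 2 + t) (Ioi 0) := by
  intro t ht u hu htu
  have : (t - u) * (t + u + 1) = 0 := by simp only at htu; linear_combination htu
  have hpos : t + u + 1 ≠ 0 := by simp only [mem_Ioi] at ht hu; linarith
  simpa [sub_eq_zero, hpos] using this

lemma image_sq_add_self_Ioi : (fun t : ℝ => t ^ 2 + t) '' Ioi 0 = Ioi 0 := by
  refine Subset.antisymm ?_ fun s (hs : 0 < s) => ?_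
  · rintro - ⟨t, ht : 0 < t, rfl⟩
    exact (by positivity : 0 < t ^ 2 + t)
  · have hroot : 1 < √(1 + 4 * s) := by
      rw [Real.lt_sqrt zero_le_one]; linarith
    refine ⟨(√(1 + 4 * s) - 1) / 2, by simp only [mem_Ioi]; linarith, ?_⟩
    linear_combination (Real.sq_sqrt (by linarith : (0 : ℝ) ≤ 1 + 4 * s)) / 4

lemma hasDerivAt_sq_add_self (t : ℝ) : HasDerivAt (fun t : ℝ => t ^ 2 + t) (2 * t + 1) t :=
  ((hasDerivAt_pow 2 t).add (hasDerivAt_id t)).congr_deriv (by ring)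

lemma abs_deriv_smul_fIntKernel (D : ℝ) {t : ℝ} (ht : 0 < t) :
    |2 * t + 1| • fIntKernel D (t ^ 2 + t)
      = D * (2 * t + 1) / ((t + 1) * (t ^ 2 + t + D)) := by
  rw [smul_eq_mul, abs_of_pos (by linarith), fIntKernel, fIntWeight_sq_add_self ht.le]
  field_simp

lemma integrableOn_fInt_integrand {D : ℝ} (hD : 0 ≤ D) :
    IntegrableOn (fun t => D * (2 * t + 1) / ((t + 1) * (t ^ 2 + t + D))) (Ioi 0) := by
  have hcont : ContinuousOn (fun t => D * (2 * t + 1) / ((t + 1) * (t ^ 2 + t + D))) (Ioi 0) :=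
    ContinuousOn.div (by fun_prop) (by fun_prop) fun t (ht : 0 < t) => by positivity
  refine ((integrable_inv_one_add_sq.const_mul (2 * (D + 1))).integrableOn).mono'
    (hcont.aestronglyMeasurable measurableSet_Ioi) ?_
  filter_upwards [ae_restrict_mem measurableSet_Ioi] with t (ht : 0 < t)
  have hfrac : (2 * t + 1) / (t + 1) ≤ 2 := by
    rw [div_le_iff₀ (by positivity)]; linarith
  have hdecay : D / (t ^ 2 + t + D) ≤ (D + 1) * (1 + t ^ 2)⁻¹ := by
    rw [← div_eq_mul_inv, div_le_div_iff₀ (by positivity) (by positivity)]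
    nlinarith [mul_nonneg hD ht.le, sq_nonneg t]
  calc ‖D * (2 * t + 1) / ((t + 1) * (t ^ 2 + t + D))‖
      = (2 * t + 1) / (t + 1) * (D / (t ^ 2 + t + D)) := by
        rw [Real.norm_of_nonneg (by positivity)]; field_simp
    _ ≤ 2 * ((D + 1) * (1 + t ^ 2)⁻¹) := by gcongr
    _ = 2 * (D + 1) * (1 + t ^ 2)⁻¹ := by ring

lemma fInt_eq_integral_fIntKernel (D : ℝ) : fInt D = ∫ s in Ioi 0, fIntKernel D s := by
  rw [← image_sq_add_self_Ioi, integral_image_eq_integral_abs_deriv_smul measurableSet_Ioi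
    (fun t _ => (hasDerivAt_sq_add_self t).hasDerivWithinAt) injOn_sq_add_self, fInt]
  exact setIntegral_congr_fun measurableSet_Ioi fun t ht => (abs_deriv_smul_fIntKernel D ht).symm

lemma integrableOn_fIntKernel {D : ℝ} (hD : 0 ≤ D) : IntegrableOn (fIntKernel D) (Ioi 0) := by
  rw [← image_sq_add_self_Ioi, integrableOn_image_iff_integrableOn_abs_deriv_smul
    measurableSet_Ioi (fun t _ => (hasDerivAt_sq_add_self t).hasDerivWithinAt) injOn_sq_add_self]
  exact (integrableOn_fInt_integrand hD).congr_fun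
    (fun t ht => (abs_deriv_smul_fIntKernel D ht).symm) measurableSet_Ioi

lemma fInt_add_le {u v : ℝ} (hu : 0 ≤ u) (hv : 0 ≤ v) : fInt (u + v) ≤ fInt u + fInt v := by
  simp only [fInt_eq_integral_fIntKernel]
  rw [← integral_add (integrableOn_fIntKernel hu) (integrableOn_fIntKernel hv)]
  exact setIntegral_mono_of_nonneg (fun s hs => fIntKernel_nonneg (by positivity) (le_of_lt hs))
    (fun s hs => fIntKernel_add_le hu hv hs)
    ((integrableOn_fIntKernel hu).add (integrableOn_fIntKernel hv))

lemma fInt_sq_mul_le {c x : ℝ} (hc₀ : 0 ≤ c) (hc₁ : c ≤ 1) (hx : 0 ≤ x) :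
    fInt (c ^ 2 * x) ≤ c * fInt x := by
  rcases hc₀.eq_or_lt with rfl | hc
  · simp [fInt]
  have hc2 : 0 < c ^ 2 := by positivity
  calc fInt (c ^ 2 * x)
      = ∫ r in Ioi 0, c ^ 2 * fIntKernel (c ^ 2 * x) (c ^ 2 * r) := by
        have hsubst := integral_comp_mul_left_Ioi' (fIntKernel (c ^ 2 * x)) 0 hc2
        rw [mul_zero, smul_eq_mul] at hsubst
        rw [integral_const_mul, hsubst, fInt_eq_integral_fIntKernel]
    _ ≤ ∫ r in Ioi 0, c * fIntKernel x r :=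
        setIntegral_mono_of_nonneg
          (fun r (hr : 0 < r) =>
            mul_nonneg hc2.le (fIntKernel_nonneg (by positivity) (by positivity)))
          (fun r hr => sq_mul_fIntKernel_sq_mul_le hc₀ hc₁ hx hr)
          ((integrableOn_fIntKernel hx).const_mul c)
    _ = c * fInt x := by rw [integral_const_mul, fInt_eq_integral_fIntKernel]

/-- The function `f` satisfies `f(a²x + b²y) ≤ a f(x) + b f(y)` for
`0 ≤ a, b ≤ 1` and `x, y ≥ 0`. -/
theorem fInt_subadditive_bound {a b x y : ℝ}
    (ha₀ : 0 ≤ a) (ha₁ : a ≤ 1) (hb₀ : 0 ≤ b) (hb₁ : b ≤ 1)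
    (hx : 0 ≤ x) (hy : 0 ≤ y) :
    fInt (a ^ 2 * x + b ^ 2 * y) ≤ a * fInt x + b * fInt y :=
  calc fInt (a ^ 2 * x + b ^ 2 * y)
      ≤ fInt (a ^ 2 * x) + fInt (b ^ 2 * y) := fInt_add_le (by positivity) (by positivity)
    _ ≤ a * fInt x + b * fInt y :=
        add_le_add (fInt_sq_mul_le ha₀ ha₁ hx) (fInt_sq_mul_le hb₀ hb₁ hy)
end
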